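/- Fix n, angles θ_enc ∈ (0, π) with θ_enc ∉ π·ℚ and θ_ent ∉ π·ℚ. For a simple graph K on [n] with max degree d_max(K) > 0, define the one-repetition pre-mixer state ψ_K : {0,1}^n → ℂ by ψ_K(s) = exp(iθ_ent·cut_K(s)) · exp(−i(θ_ent/2)|E_K|) · ∏_{i:s_i=0} cos α_i^K · ∏_{i:s_i=1} (−i sin α_i^K), where α_i^K = (θ_enc/2)·deg_K(i)/d_max(K). If G, H are simple graphs on [n] with positive maximum degree and ψ_G = ψ_H as functions, then G = H. -/

import Mathlib

/-- The number of edges of `K` cut by the bit assignment `s`. -/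
def cutCount {n : ℕ} (K : SimpleGraph (Fin n)) [DecidableRel K.Adj]
    (s : Fin n → Bool) : ℕ :=
  (K.edgeFinset.filter fun e => s e.inf ≠ s e.sup).card

/-- Maximum degree of `K`. -/
def maxDegree {n : ℕ} (K : SimpleGraph (Fin n)) [DecidableRel K.Adj] : ℕ :=
  Finset.univ.sup (fun v => K.degree v)

/-- Encoding angle of vertex `i` for graph `K`. -/
noncomputable def encAngle {n : ℕ} (K : SimpleGraph (Fin n))
    [DecidableRel K.Adj] (θenc : ℝ) (i : Fin n) : ℝ :=
  (θenc / 2) * (K.degree i : ℝ) / (maxDegree K : ℝ)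

/-- The one-repetition pre-mixer state of `K`. -/
noncomputable def psi {n : ℕ} (K : SimpleGraph (Fin n)) [DecidableRel K.Adj]
    (θenc θent : ℝ) (s : Fin n → Bool) : ℂ :=
  Complex.exp (Complex.I * θent * (cutCount K s : ℂ)) *
    Complex.exp (-Complex.I * (θent / 2) * (K.edgeFinset.card : ℂ)) *
    ∏ i, (if s i then -Complex.I * (Real.sin (encAngle K θenc i) : ℂ)
      else (Real.cos (encAngle K θenc i) : ℂ))

/-!
The moduli of the amplitudes do not see the phases: at the empty bitstring and at the unit vector
`eᵢ` they give `tan αᵢ` as a ratio, and `tan` is injective on `[0, π/2)`, so both graphs have the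
same encoding angles. The common product of the amplitudes is nonzero on bitstrings supported on
non-isolated vertices, where the irrationality of `θent / π` turns equality of phases into
equality of the rationals `cut(s) - |E| / 2`. This gives `|E_G| = |E_H|` and then equal cut
functions, which determine a graph: `cut(eᵤ) = deg u` and
`cut(eᵤ + e_v) = deg u + deg v - 2·[u ~ v]`.
-/

open Finset
open scoped symmDiff

theorem Finset.card_symmDiff_add_two_mul_card_inter {α : Type*} [DecidableEq α]
    (s t : Finset α) : #(s ∆ t) + 2 * #(s ∩ t) = #s + #t := by
  rw [symmDiff_eq_sup_sdiff_inf, sup_eq_union, inf_eq_inter, ← card_union_add_card_inter s t,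
    card_sdiff_of_subset inter_subset_union]
  have := card_le_card (inter_subset_union (s := s) (t := t))
  omega

namespace SimpleGraph

theorem adj_iff_incidenceFinset_inter_nonempty {V : Type*} [Fintype V]
    [DecidableEq V] (K : SimpleGraph V) [DecidableRel K.Adj] {u v : V} (huv : u ≠ v) :
    K.Adj u v ↔ (K.incidenceFinset u ∩ K.incidenceFinset v).Nonempty := by
  refine ⟨fun h => ⟨s(u, v), ?_⟩, fun ⟨e, he⟩ => ?_⟩
  · simp [mem_incidenceFinset, K.mk'_mem_incidenceSet_left_iff, h, K.mk'_mem_incidenceSet_right_iff]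
  · rw [mem_inter, mem_incidenceFinset, mem_incidenceFinset] at he
    exact K.adj_of_mem_incidenceSet huv he.1 he.2

end SimpleGraph

section Cut

open SimpleGraph

variable {n : ℕ} (K : SimpleGraph (Fin n)) [DecidableRel K.Adj]

def cutSet (s : Fin n → Bool) : Finset (Sym2 (Fin n)) :=
  K.edgeFinset.filter fun e => s e.inf ≠ s e.sup

theorem cutCount_eq_card_cutSet (s : Fin n → Bool) : cutCount K s = #(cutSet K s) := rfl

variable {K}

theorem mk_mem_cutSet {s : Fin n → Bool} {a b : Fin n} :
    s(a, b) ∈ cutSet K s ↔ K.Adj a b ∧ s a ≠ s b := by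
  rw [cutSet, mem_filter, mem_edgeFinset, mem_edgeSet, Sym2.inf_mk, Sym2.sup_mk]
  rcases le_total a b with h | h
  · rw [inf_of_le_left h, sup_of_le_right h]
  · rw [inf_of_le_right h, sup_of_le_left h, ne_comm]

theorem cutSet_xor (s t : Fin n → Bool) :
    cutSet K (fun j => s j ^^ t j) = cutSet K s ∆ cutSet K t := by
  ext e
  induction e using Sym2.ind with
  | _ a b =>
    simp only [mem_symmDiff, mk_mem_cutSet]
    cases s a <;> cases s b <;> cases t a <;> cases t b <;> simp

theorem cutCount_const (b : Bool) : cutCount K (fun _ => b) = 0 := by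
  simp [cutCount]

theorem cutSet_single (u : Fin n) : cutSet K (fun j => decide (j = u)) = K.incidenceFinset u := by
  ext e
  induction e using Sym2.ind with
  | _ a b =>
    rw [mk_mem_cutSet, mem_incidenceFinset, mk'_mem_incidenceSet_iff]
    refine and_congr_right fun hab => ?_
    have := hab.ne
    by_cases ha : a = u <;> by_cases hb : b = u <;> simp_all [eq_comm]

theorem cutCount_single (u : Fin n) : cutCount K (fun j => decide (j = u)) = K.degree u := by
  rw [cutCount_eq_card_cutSet, cutSet_single, card_incidenceFinset_eq_degree]

theorem cutCount_pair (u v : Fin n) :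
    cutCount K (fun j => decide (j = u) ^^ decide (j = v)) +
      2 * #(K.incidenceFinset u ∩ K.incidenceFinset v) = K.degree u + K.degree v := by
  rw [cutCount_eq_card_cutSet, cutSet_xor, cutSet_single, cutSet_single,
    card_symmDiff_add_two_mul_card_inter, card_incidenceFinset_eq_degree,
    card_incidenceFinset_eq_degree]

theorem cutCount_congr_of_degree_pos {s t : Fin n → Bool}
    (hst : ∀ i, 0 < K.degree i → s i = t i) : cutCount K s = cutCount K t := by
  rw [cutCount_eq_card_cutSet, cutCount_eq_card_cutSet]
  congr 1
  ext e
  induction e using Sym2.ind with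
  | _ a b =>
    simp only [mk_mem_cutSet]
    refine and_congr_right fun hab => ?_
    rw [hst a (K.degree_pos_iff_exists_adj a |>.2 ⟨b, hab⟩),
      hst b (K.degree_pos_iff_exists_adj b |>.2 ⟨a, hab.symm⟩)]

theorem eq_of_cutCount_eq {G H : SimpleGraph (Fin n)} [DecidableRel G.Adj]
    [DecidableRel H.Adj] (h : ∀ s, cutCount G s = cutCount H s) : G = H := by
  ext u v
  by_cases huv : u = v
  · simp [huv]
  have hdeg (w : Fin n) : G.degree w = H.degree w := by
    rw [← cutCount_single, ← cutCount_single, h]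
  have hG := cutCount_pair (K := G) u v
  have hH := cutCount_pair (K := H) u v
  rw [h, hdeg, hdeg] at hG
  rw [G.adj_iff_incidenceFinset_inter_nonempty huv, H.adj_iff_incidenceFinset_inter_nonempty huv,
    ← card_pos, ← card_pos]
  omega

end Cut

open Real Complex in
theorem rat_eq_of_exp_mul_I_eq {θ : ℝ} (hθ : Irrational (θ / π)) {r t : ℚ}
    (h : exp ((θ * r : ℝ) * I) = exp ((θ * t : ℝ) * I)) : r = t := by
  by_contra hrt
  obtain ⟨k, hk⟩ := Complex.exp_eq_exp_iff_exists_int.1 h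
  have hk' : θ / π * (r - t : ℚ) = (2 * k : ℤ) := by
    have : ((θ * (r - t) : ℝ) : ℂ) * I = ((2 * k * π : ℝ) : ℂ) * I := by
      push_cast at hk ⊢; linear_combination hk
    have := ofReal_injective (mul_right_cancel₀ I_ne_zero this)
    push_cast
    field_simp
    linear_combination this
  exact (hθ.mul_ratCast (sub_ne_zero.2 hrt)).ne_int _ hk'

/-- The amplitudes of the product state `⊗ᵢ (cos αᵢ |0⟩ - i sin αᵢ |1⟩)`, i.e. of
`∏ᵢ exp (-i αᵢ Xᵢ)` applied to `|0…0⟩`. -/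
noncomputable def productAmplitude {ι : Type*} [Fintype ι] (α : ι → ℝ) (s : ι → Bool) : ℂ :=
  ∏ i, if s i then -Complex.I * (Real.sin (α i) : ℂ) else (Real.cos (α i) : ℂ)

section Amplitude

open Real

variable {ι : Type*} [Fintype ι] {α : ι → ℝ}

theorem abs_tan_eq_norm_productAmplitude_div [DecidableEq ι] (hα : ∀ j, cos (α j) ≠ 0) (i : ι) :
    |tan (α i)| = ‖productAmplitude α (fun j => decide (j = i))‖ /
      ‖productAmplitude α (fun _ => false)‖ := by
  set R : ℂ := ∏ j ∈ {i}ᶜ, (cos (α j) : ℂ)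
  have hR : R ≠ 0 := prod_ne_zero_iff.2 fun j _ => Complex.ofReal_ne_zero.2 (hα j)
  have h1 : productAmplitude α (fun j => decide (j = i)) = -Complex.I * sin (α i) * R := by
    rw [productAmplitude, Fintype.prod_eq_mul_prod_compl i]
    simp only [decide_true, if_true]
    congr 1
    exact prod_congr rfl fun j hj => if_neg (by simpa using hj)
  have h0 : productAmplitude α (fun _ => false) = cos (α i) * R := by
    rw [productAmplitude, Fintype.prod_eq_mul_prod_compl i]
    simp only [Bool.false_eq_true, if_false, R]
  simp only [h1, h0, norm_mul, norm_neg, Complex.norm_I, Complex.norm_real, Real.norm_eq_abs,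
    one_mul]
  rw [tan_eq_sin_div_cos, abs_div, mul_div_mul_right _ _ (norm_ne_zero_iff.2 hR)]

theorem eq_of_norm_productAmplitude_eq [DecidableEq ι] {β : ι → ℝ}
    (hα : ∀ i, α i ∈ Set.Ico 0 (π / 2)) (hβ : ∀ i, β i ∈ Set.Ico 0 (π / 2))
    (h : ∀ s, ‖productAmplitude α s‖ = ‖productAmplitude β s‖) : α = β := by
  have hIoo : Set.Ico 0 (π / 2) ⊆ Set.Ioo (-(π / 2)) (π / 2) :=
    Set.Ico_subset_Ioo_left (by linarith [pi_pos])
  have htan {γ : ι → ℝ} (hγ : ∀ i, γ i ∈ Set.Ico 0 (π / 2)) (i : ι) :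
      tan (γ i) = ‖productAmplitude γ (fun j => decide (j = i))‖ /
        ‖productAmplitude γ (fun _ => false)‖ := by
    rw [← abs_tan_eq_norm_productAmplitude_div fun j => (cos_pos_of_mem_Ioo (hIoo (hγ j))).ne',
      abs_of_nonneg (tan_nonneg_of_nonneg_of_le_pi_div_two (hγ i).1 (hγ i).2.le)]
  funext i
  exact injOn_tan (hIoo (hα i)) (hIoo (hβ i)) (by rw [htan hα, htan hβ, h, h])

theorem productAmplitude_ne_zero (hα : ∀ i, α i ∈ Set.Ico 0 (π / 2)) {s : ι → Bool}
    (hs : ∀ i, s i → 0 < α i) : productAmplitude α s ≠ 0 := by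
  refine prod_ne_zero_iff.2 fun i _ => ?_
  split_ifs with hsi
  · exact mul_ne_zero (neg_ne_zero.2 Complex.I_ne_zero) (Complex.ofReal_ne_zero.2
      (sin_pos_of_pos_of_lt_pi (hs i hsi) (by linarith [(hα i).2, pi_pos])).ne')
  · exact Complex.ofReal_ne_zero.2
      (cos_pos_of_mem_Ioo ⟨by linarith [(hα i).1, pi_pos], (hα i).2⟩).ne'

end Amplitude

section State

open Real

variable {n : ℕ} (K : SimpleGraph (Fin n)) [DecidableRel K.Adj] {θenc : ℝ}

theorem degree_le_maxDegree (i : Fin n) : K.degree i ≤ maxDegree K :=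
  Finset.le_sup (f := fun v => K.degree v) (Finset.mem_univ i)

theorem encAngle_mem_Ico (hθ0 : 0 ≤ θenc) (hθπ : θenc < π) (i : Fin n) :
    encAngle K θenc i ∈ Set.Ico 0 (π / 2) := by
  have hle : encAngle K θenc i ≤ θenc / 2 := by
    rw [encAngle, mul_div_assoc]
    exact mul_le_of_le_one_right (by linarith)
      (div_le_one_of_le₀ (by exact_mod_cast degree_le_maxDegree K i) (Nat.cast_nonneg _))
  exact ⟨by unfold encAngle; positivity, by linarith⟩

theorem encAngle_pos_iff (hθ0 : 0 < θenc) (i : Fin n) :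
    0 < encAngle K θenc i ↔ 0 < K.degree i := by
  refine ⟨fun h => Nat.pos_of_ne_zero fun hi => by simp [encAngle, hi] at h, fun hi => ?_⟩
  have : 0 < maxDegree K := hi.trans_le (degree_le_maxDegree K i)
  unfold encAngle
  positivity

theorem psi_eq_exp_mul_productAmplitude (θent : ℝ) (s : Fin n → Bool) :
    psi K θenc θent s = Complex.exp ((θent * ((cutCount K s - #K.edgeFinset / 2 : ℚ) : ℝ) : ℝ) *
      Complex.I) * productAmplitude (encAngle K θenc) s := by
  rw [psi, ← Complex.exp_add, productAmplitude]
  push_cast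
  ring_nf

theorem norm_psi (θent : ℝ) (s : Fin n → Bool) :
    ‖psi K θenc θent s‖ = ‖productAmplitude (encAngle K θenc) s‖ := by
  rw [psi_eq_exp_mul_productAmplitude, norm_mul, Complex.norm_exp_ofReal_mul_I, one_mul]

end State

theorem one_repetition_injectivity_general {n : ℕ}
    (G H : SimpleGraph (Fin n)) [DecidableRel G.Adj] [DecidableRel H.Adj]
    (θenc θent : ℝ) (hθenc0 : 0 < θenc) (hθencπ : θenc < Real.pi)
    (hθent : Irrational (θent / Real.pi))
    (h : ∀ s : Fin n → Bool, psi G θenc θent s = psi H θenc θent s) :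
    G = H := by
  have hG := encAngle_mem_Ico G hθenc0.le hθencπ
  have hangle : encAngle G θenc = encAngle H θenc :=
    eq_of_norm_productAmplitude_eq hG (encAngle_mem_Ico H hθenc0.le hθencπ) fun s => by
      rw [← norm_psi G θent, ← norm_psi H θent, h]
  have hsupport (i : Fin n) : 0 < G.degree i ↔ 0 < H.degree i := by
    rw [← encAngle_pos_iff G hθenc0, ← encAngle_pos_iff H hθenc0, hangle]
  have hphase (s : Fin n → Bool) (hs : ∀ i, s i → 0 < G.degree i) :
      (cutCount G s - #G.edgeFinset / 2 : ℚ) = cutCount H s - #H.edgeFinset / 2 := by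
    have hne := productAmplitude_ne_zero hG fun i hi => (encAngle_pos_iff G hθenc0 i).2 (hs i hi)
    have := h s
    rw [psi_eq_exp_mul_productAmplitude, psi_eq_exp_mul_productAmplitude, ← hangle] at this
    exact rat_eq_of_exp_mul_I_eq hθent (mul_right_cancel₀ hne this)
  have hedges : (#G.edgeFinset : ℚ) = #H.edgeFinset := by
    simpa [cutCount_const] using hphase (fun _ => false) (by simp)
  refine eq_of_cutCount_eq fun s => ?_
  let t (j : Fin n) : Bool := s j && decide (0 < G.degree j)
  have ht : cutCount G t = cutCount H t := by
    have := hphase t (by simp [t])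
    rw [hedges] at this
    exact_mod_cast sub_left_injective this
  calc cutCount G s = cutCount G t := cutCount_congr_of_degree_pos fun i hi => by simp [t, hi]
    _ = cutCount H t := ht
    _ = cutCount H s := cutCount_congr_of_degree_pos fun i hi => by simp [t, (hsupport i).2 hi]

theorem one_repetition_injectivity {n : ℕ}
    (G H : SimpleGraph (Fin n)) [DecidableRel G.Adj] [DecidableRel H.Adj]
    (θenc θent : ℝ) (hθenc0 : 0 < θenc) (hθencπ : θenc < Real.pi)
    (hθenc : Irrational (θenc / Real.pi)) (hθent : Irrational (θent / Real.pi))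
    (hG : 0 < maxDegree G) (hH : 0 < maxDegree H)
    (h : ∀ s : Fin n → Bool, psi G θenc θent s = psi H θenc θent s) :
    G = H :=
  one_repetition_injectivity_general G H θenc θent hθenc0 hθencπ hθent h
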